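/- arXiv:1211.3107 — 5 statements merged into one kernel-verified Lean document; each statement's English description precedes it below -/
import Mathlib

section
/- For all real numbers x and y with -1 ≤ x ≤ 1 and -1 ≤ y ≤ 1, if |x - y| ≤ a for some non-negative real number a, then |arccos x - arccos y| ≤ π · √(a/2). -/
/-!
Put `u = arccos x`, `v = arccos y` in `[0, π]`. For such angles
`1 - cos (u - v) ≤ |cos u - cos v|`, because the difference of the two sides (for `u ≤ v`)
factors as `4 sin ((v - u) / 2) cos (v / 2) sin (u / 2)`, a product of nonnegative terms.
The quadratic bound `cos t ≤ 1 - 2 t² / π²` for `|t| ≤ π` then gives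
`2 (u - v)² / π² ≤ |x - y| ≤ a`.
-/

open Real

lemma cos_sub_cos_add_cos_sub_sub_one (u v : ℝ) :
    cos u - cos v + cos (v - u) - 1 = 4 * sin ((v - u) / 2) * cos (v / 2) * sin (u / 2) := by
  obtain ⟨p, rfl⟩ : ∃ p, u = 2 * p := ⟨u / 2, by ring⟩
  obtain ⟨q, rfl⟩ : ∃ q, v = 2 * q := ⟨v / 2, by ring⟩
  rw [← mul_sub, mul_div_cancel_left₀ _ two_ne_zero, mul_div_cancel_left₀ _ two_ne_zero,
    mul_div_cancel_left₀ _ two_ne_zero, cos_two_mul, cos_two_mul, cos_two_mul, cos_sub, sin_sub]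
  linear_combination (2 * sin p ^ 2) * sin_sq_add_cos_sq q + (2 + 2 * cos q ^ 2) * sin_sq_add_cos_sq p

lemma one_sub_cos_sub_le_abs_cos_sub_cos {u v : ℝ} (hu : u ∈ Set.Icc 0 π) (hv : v ∈ Set.Icc 0 π) :
    1 - cos (u - v) ≤ |cos u - cos v| := by
  wlog huv : u ≤ v generalizing u v
  · rw [← cos_neg, neg_sub, abs_sub_comm]
    exact this hv hu (le_of_not_ge huv)
  obtain ⟨hu₀, huπ⟩ := hu
  obtain ⟨hv₀, hvπ⟩ := hv
  have hprod : 0 ≤ 4 * sin ((v - u) / 2) * cos (v / 2) * sin (u / 2) := by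
    have := sin_nonneg_of_nonneg_of_le_pi (x := (v - u) / 2) (by linarith) (by linarith)
    have := cos_nonneg_of_mem_Icc (x := v / 2) ⟨by linarith, by linarith⟩
    have := sin_nonneg_of_nonneg_of_le_pi (x := u / 2) (by linarith) (by linarith)
    positivity
  rw [← cos_neg, neg_sub]
  linarith [cos_sub_cos_add_cos_sub_sub_one u v, le_abs_self (cos u - cos v)]

lemma abs_sub_le_pi_mul_sqrt_abs_cos_sub_cos {u v : ℝ} (hu : u ∈ Set.Icc 0 π)
    (hv : v ∈ Set.Icc 0 π) : |u - v| ≤ π * √(|cos u - cos v| / 2) := by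
  have hd : |u - v| ≤ π := abs_sub_le_iff.2 ⟨by linarith [hu.2, hv.1], by linarith [hu.1, hv.2]⟩
  have hquad : 2 / π ^ 2 * (u - v) ^ 2 ≤ |cos u - cos v| := by
    linarith [cos_le_one_sub_mul_cos_sq hd, one_sub_cos_sub_le_abs_cos_sub_cos hu hv]
  rw [← sqrt_sq pi_pos.le, ← sqrt_mul (sq_nonneg π)]
  apply abs_le_sqrt
  rw [div_mul_eq_mul_div, div_le_iff₀ (by positivity)] at hquad
  linarith

theorem arccos_diff_le_general (a x y : ℝ)
    (hx : -1 ≤ x) (hx' : x ≤ 1) (hy : -1 ≤ y) (hy' : y ≤ 1)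
    (hxy : |x - y| ≤ a) :
    |Real.arccos x - Real.arccos y| ≤ Real.pi * Real.sqrt (a / 2) := by
  calc |arccos x - arccos y|
      ≤ π * √(|cos (arccos x) - cos (arccos y)| / 2) :=
        abs_sub_le_pi_mul_sqrt_abs_cos_sub_cos ⟨arccos_nonneg x, arccos_le_pi x⟩
          ⟨arccos_nonneg y, arccos_le_pi y⟩
    _ ≤ π * √(a / 2) := by
        rw [cos_arccos hx hx', cos_arccos hy hy']
        gcongr

theorem arccos_diff_le (a x y : ℝ) (ha : 0 ≤ a)
    (hx : -1 ≤ x) (hx' : x ≤ 1) (hy : -1 ≤ y) (hy' : y ≤ 1)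
    (hxy : |x - y| ≤ a) :
    |Real.arccos x - Real.arccos y| ≤ Real.pi * Real.sqrt (a / 2) :=
  arccos_diff_le_general a x y hx hx' hy hy' hxy
end

section
/- For all real numbers x and y in [0, π], we have |cos x - cos y| ≥ (2/π^2)·(x - y)^2. -/
open Real

lemma cos_diff_aux (x y : ℝ) (hx : x ∈ Set.Icc 0 Real.pi)
    (hy : y ∈ Set.Icc 0 Real.pi) (hxy : x ≤ y) :
    Real.cos x - Real.cos y ≥ (2 / Real.pi ^ 2) * (x - y) ^ 2 := by
  obtain ⟨hx0, hxpi⟩ := hx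
  obtain ⟨hy0, hypi⟩ := hy
  have hpi := Real.pi_pos
  set a := (x + y) / 2 with ha
  set b := (y - x) / 2 with hb
  have hb0 : 0 ≤ b := by unfold b; linarith
  have hb2 : b ≤ π / 2 := by unfold b; linarith
  have hsinb : 2 / π * b ≤ Real.sin b := Real.mul_le_sin hb0 hb2
  have hsina : 2 / π * b ≤ Real.sin a := by
    rcases le_total a (π / 2) with h | h
    · have ha0 : 0 ≤ a := by unfold a; linarith
      have hba : b ≤ a := by unfold a b; linarith
      calc 2 / π * b ≤ 2 / π * a := by
            apply mul_le_mul_of_nonneg_left hba; positivity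
        _ ≤ Real.sin a := Real.mul_le_sin ha0 h
    · have h1 : 0 ≤ π - a := by unfold a; linarith
      have h2 : π - a ≤ π / 2 := by linarith
      have h3 : b ≤ π - a := by unfold a b; linarith
      have := Real.mul_le_sin h1 h2
      rw [Real.sin_pi_sub] at this
      calc 2 / π * b ≤ 2 / π * (π - a) := by
            apply mul_le_mul_of_nonneg_left h3; positivity
        _ ≤ Real.sin a := this
  have hkey : Real.cos x - Real.cos y = 2 * Real.sin a * Real.sin b := by
    rw [Real.cos_sub_cos]
    have : (x - y) / 2 = -b := by unfold b; ring
    rw [this, Real.sin_neg]; ring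
  have hbpos : 0 ≤ 2 / π * b := by positivity
  have hprod : (2 / π * b) * (2 / π * b) ≤ Real.sin a * Real.sin b :=
    mul_le_mul hsina hsinb hbpos (by linarith [Real.mul_le_sin hb0 hb2, hbpos] : (0:ℝ) ≤ Real.sin a)
  have hx2 : (2 / Real.pi ^ 2) * (x - y) ^ 2 = 2 * ((2 / π * b) * (2 / π * b)) := by
    unfold b; field_simp; ring
  rw [hkey, hx2, ge_iff_le]
  nlinarith [hprod]

theorem cos_diff_lower_bound (x y : ℝ) (hx : x ∈ Set.Icc 0 Real.pi)
    (hy : y ∈ Set.Icc 0 Real.pi) :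
    |Real.cos x - Real.cos y| ≥ (2 / Real.pi ^ 2) * (x - y) ^ 2 := by
  rcases le_total x y with h | h
  · have := cos_diff_aux x y hx hy h
    calc (2 / Real.pi ^ 2) * (x - y) ^ 2 ≤ Real.cos x - Real.cos y := this
      _ ≤ |Real.cos x - Real.cos y| := le_abs_self _
  · have := cos_diff_aux y x hy hx h
    rw [abs_sub_comm]
    calc (2 / Real.pi ^ 2) * (x - y) ^ 2 = (2 / Real.pi ^ 2) * (y - x) ^ 2 := by ring
      _ ≤ Real.cos y - Real.cos x := this
      _ ≤ |Real.cos y - Real.cos x| := le_abs_self _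
end

section
/- For every integer n ≥ 3, ω(n) < 1.3841 · log n / log log n, where ω(n) is the number of distinct prime divisors of n. -/
/-!
If `ω(n) = k`, then `n` is at least the product of `k` distinct primes, hence at least
`∏_{j<k} b_j` for any `b` with `π'(b_j) ≤ j`; we take for `b_j` the `(j+1)`-st prime when
`j < 17` and `3j - 2` beyond. As `t ↦ t / log t` increases on `[e, ∞)`, a lower bound `a` for
`log n` with `a ≥ e` and `k · log a < 1.3841 · a` proves the claim. For `k ≤ 3` this is just
`t / log t ≥ e`; for `4 ≤ k ≤ 12` the bounds are rationals certified by integer arithmetic (the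
constant is nearly sharp at `k = 9`); for `k ≥ 13` the product exceeds `k^k`, so `a = k log k`
works because `log log k ≤ log k / e` and `1 + 1/e < 1.3841`.
-/

open Real Finset
open scoped Nat.Prime

lemma prod_range_le_prod_of_count_le {P : ℕ → Prop} [DecidablePred P] {b : ℕ → ℕ}
    (S : Finset ℕ) (hS : ∀ x ∈ S, P x) (hb : ∀ j < #S, Nat.count P (b j) ≤ j) :
    ∏ j ∈ range #S, b j ≤ ∏ x ∈ S, x := by
  induction S using Finset.induction_on_max with
  | empty => simp
  | insert a s hlt ih =>
    have ha : a ∉ s := fun h => (hlt a h).false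
    rw [card_insert_of_notMem ha] at hb ⊢
    rw [prod_range_succ, prod_insert ha, mul_comm a]
    refine Nat.mul_le_mul (ih (fun x hx => hS x (mem_insert_of_mem hx))
      (fun j hj => hb j (by omega))) ?_
    by_contra! hab
    have hsub : insert a s ⊆ {x ∈ range (b #s) | P x} := fun x hx => by
      rw [mem_filter, mem_range]
      refine ⟨?_, hS x hx⟩
      rcases mem_insert.1 hx with rfl | hx
      · exact hab
      · exact (hlt x hx).trans hab
    have := card_le_card hsub
    rw [card_insert_of_notMem ha, ← Nat.count_eq_card_filter_range] at this
    have := hb #s (by omega)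
    omega

lemma primeCounting'_three_mul_sub_two_le {j : ℕ} (hj : 17 ≤ j) : π' (3 * j - 2) ≤ j := by
  have h := Nat.primeCounting'_add_le (a := 6) (k := 49) (by norm_num) (by norm_num) (3 * j - 51)
  have h49 : π' 49 = 15 := by decide
  have h6 : Nat.totient 6 = 2 := by decide
  rw [h49, h6, show 49 + (3 * j - 51) = 3 * j - 2 by omega] at h
  omega

def primeLowerBound (j : ℕ) : ℕ :=
  [2, 3, 5, 7, 11, 13, 17, 19, 23, 29, 31, 37, 41, 43, 47, 53, 59].getD j (3 * j - 2)

lemma primeLowerBound_of_le {j : ℕ} (hj : 17 ≤ j) : primeLowerBound j = 3 * j - 2 :=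
  List.getD_eq_default _ _ (by simpa using hj)

lemma primeCounting'_primeLowerBound_le (j : ℕ) : π' (primeLowerBound j) ≤ j := by
  obtain hj | hj := lt_or_ge j 17
  · interval_cases j <;> decide
  · rw [primeLowerBound_of_le hj]
    exact primeCounting'_three_mul_sub_two_le hj

lemma prod_primeLowerBound_le {n : ℕ} (hn : n ≠ 0) :
    ∏ j ∈ range #n.primeFactors, primeLowerBound j ≤ n :=
  (prod_range_le_prod_of_count_le _ (fun _ => Nat.prime_of_mem_primeFactors)
    (fun j _ => primeCounting'_primeLowerBound_le j)).trans
    (Nat.le_of_dvd (Nat.pos_of_ne_zero hn) (Nat.prod_primeFactors_dvd n))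

lemma exp_one_mul_log_le_self {t : ℝ} (ht : 0 < t) : exp 1 * log t ≤ t := by
  simpa [exp_log ht] using exp_one_mul_le_exp (x := log t)

lemma lt_mul_div_log_of_lt_mul_exp_one {C K t : ℝ} (ht : 1 < t) (hC : 0 ≤ C)
    (hK : K < C * exp 1) : K < C * t / log t := by
  have hlog : 0 < log t := log_pos ht
  rw [lt_div_iff₀ hlog]
  calc K * log t < C * exp 1 * log t := by gcongr
    _ ≤ C * t := by rw [mul_assoc]; gcongr; exact exp_one_mul_log_le_self (by linarith)

lemma lt_mul_div_log_of_le {C K a b t : ℝ} (ha : exp 1 ≤ a) (hat : a ≤ t) (hb : log a ≤ b)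
    (hK : 0 ≤ K) (hKb : K * b < C * a) : K < C * t / log t := by
  have ha0 : 0 < a := (exp_pos 1).trans_le ha
  have ht0 : 0 < t := ha0.trans_le hat
  have hlog : 0 < log t := log_pos ((one_lt_exp_iff.2 one_pos).trans_le (ha.trans hat))
  have hanti : log t / t ≤ b / a :=
    (log_div_self_antitoneOn ha (ha.trans hat) hat).trans (div_le_div_of_nonneg_right hb ha0.le)
  rw [lt_div_iff₀ hlog]
  calc K * log t = K * t * (log t / t) := by field_simp
    _ ≤ K * t * (b / a) := mul_le_mul_of_nonneg_left hanti (by positivity)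
    _ = t * (K * b) / a := by ring
    _ < t * (C * a) / a := by gcongr
    _ = C * t := by field_simp

lemma lt_mul_log_div_log_log_of_pow_self_le {C : ℝ} (hC : 1 + (exp 1)⁻¹ < C) {k n : ℕ}
    (hk : 3 ≤ k) (hkn : k ^ k ≤ n) : (k : ℝ) < C * log n / log (log n) := by
  have hk3 : (3 : ℝ) ≤ k := by exact_mod_cast hk
  have hlogk : 1 < log k := by
    rw [lt_log_iff_exp_lt (by positivity)]
    linarith [exp_one_lt_d9]
  have hlogn : k * log k ≤ log n := by
    rw [← log_pow]
    exact log_le_log (by positivity) (by exact_mod_cast hkn)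
  refine lt_mul_div_log_of_le (a := k * log k) (b := log k + log k / exp 1) ?_ hlogn ?_
    (by positivity) ?_
  · nlinarith [exp_one_lt_d9]
  · rw [log_mul (by positivity) (by positivity)]
    gcongr
    rw [le_div_iff₀' (exp_pos 1)]
    exact exp_one_mul_log_le_self (by positivity)
  · have : 0 < k * log k := by positivity
    calc (k : ℝ) * (log k + log k / exp 1) = (1 + (exp 1)⁻¹) * (k * log k) := by ring
      _ < C * (k * log k) := by gcongr

lemma succ_pow_succ_le_pow_mul {k c : ℕ} (hc : 272 * (k + 1) ≤ 100 * c) :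
    (k + 1) ^ (k + 1) ≤ k ^ k * c := by
  have hpow : ((k : ℝ) + 1) ^ k ≤ exp 1 * k ^ k := by
    rcases k.eq_zero_or_pos with rfl | hk
    · simp
    calc ((k : ℝ) + 1) ^ k = (1 + (k : ℝ)⁻¹) ^ k * k ^ k := by
          rw [← mul_pow]; congr 1; field_simp
      _ ≤ exp 1 * k ^ k := by gcongr; exact one_add_inv_pow_le_exp
  have hc' : (272 : ℝ) * (k + 1) ≤ 100 * c := by exact_mod_cast hc
  have : ((k : ℝ) + 1) ^ (k + 1) ≤ k ^ k * c := by
    calc ((k : ℝ) + 1) ^ (k + 1) = (k + 1) * (k + 1) ^ k := by ring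
      _ ≤ (k + 1) * (exp 1 * k ^ k) := by gcongr
      _ ≤ (k + 1) * (2.72 * k ^ k) := by gcongr; linarith [exp_one_lt_d9]
      _ ≤ k ^ k * c := by nlinarith [pow_nonneg (Nat.cast_nonneg k : (0 : ℝ) ≤ k) k]
  exact_mod_cast this

lemma pow_self_le_prod_primeLowerBound {k : ℕ} (hk : 13 ≤ k) :
    k ^ k ≤ ∏ j ∈ range k, primeLowerBound j := by
  induction k, hk using Nat.le_induction with
  | base => decide
  | succ k hk ih =>
    have hc : 272 * (k + 1) ≤ 100 * primeLowerBound k := by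
      obtain hk' | hk' := lt_or_ge k 17
      · interval_cases k <;> decide
      · rw [primeLowerBound_of_le hk']; omega
    rw [prod_range_succ]
    exact (succ_pow_succ_le_pow_mul hc).trans (Nat.mul_le_mul_right _ ih)

/-- Integer form of `3 ≤ p/q`, `e^(p/q) ≤ m` (via `e < 2.7182818286`),
`log (p/q) ≤ r/s` (via `e > 2.7182818283`) and `k · r/s < 1.3841 · p/q`. -/
def IsLogCertificate (m k p q r s : ℕ) : Prop :=
  0 < q ∧ 3 * q ≤ p ∧ 27182818286 ^ p ≤ m ^ q * 10 ^ (10 * p) ∧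
    p ^ s * 10 ^ (10 * r) ≤ q ^ s * 27182818283 ^ r ∧ k * r * q * 10000 < 13841 * p * s

instance (m k p q r s : ℕ) : Decidable (IsLogCertificate m k p q r s) := by
  unfold IsLogCertificate; infer_instance

lemma div_le_log_of_pow_le {u x : ℝ} {p q : ℕ} (hq : 0 < q) (hu : exp 1 ≤ u)
    (h : u ^ p ≤ x ^ q) : (p : ℝ) / q ≤ log x := by
  have hu0 : 0 < u := (exp_pos 1).trans_le hu
  have hlogu : 1 ≤ log u := by rwa [le_log_iff_exp_le hu0]
  rw [div_le_iff₀ (by exact_mod_cast hq), mul_comm, ← log_pow]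
  calc (p : ℝ) ≤ p * log u := le_mul_of_one_le_right (by positivity) hlogu
    _ = log (u ^ p) := by rw [log_pow]
    _ ≤ log (x ^ q) := log_le_log (by positivity) h

lemma log_le_div_of_pow_le {u x : ℝ} {r s : ℕ} (hs : 0 < s) (hx : 0 < x) (hu : 0 < u)
    (hue : u ≤ exp 1) (h : x ^ s ≤ u ^ r) : log x ≤ r / s := by
  have hlogu : log u ≤ 1 := by rwa [log_le_iff_le_exp hu]
  rw [le_div_iff₀ (by exact_mod_cast hs), mul_comm, ← log_pow]
  calc log (x ^ s) ≤ log (u ^ r) := log_le_log (by positivity) h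
    _ = r * log u := by rw [log_pow]
    _ ≤ r := mul_le_of_le_one_right (by positivity) hlogu

lemma cast_lt_of_isLogCertificate {m n k : ℕ} (p q r s : ℕ) (hmn : m ≤ n)
    (h : IsLogCertificate m k p q r s) : (k : ℝ) < 1.3841 * log n / log (log n) := by
  obtain ⟨hq, hpq, hm, hlog, hk⟩ := h
  have hs : 0 < s := Nat.pos_of_ne_zero (by rintro rfl; simp at hk)
  have hq' : (0 : ℝ) < q := by exact_mod_cast hq
  have hs' : (0 : ℝ) < s := by exact_mod_cast hs
  have hm' : (27182818286 / 10 ^ 10 : ℝ) ^ p ≤ (n : ℝ) ^ q := by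
    rw [div_pow, ← pow_mul, div_le_iff₀ (by positivity)]
    calc (27182818286 : ℝ) ^ p ≤ (m : ℝ) ^ q * 10 ^ (10 * p) := by exact_mod_cast hm
      _ ≤ (n : ℝ) ^ q * 10 ^ (10 * p) := by gcongr
  have hlog' : ((p : ℝ) / q) ^ s ≤ (27182818283 / 10 ^ 10) ^ r := by
    rw [div_pow, div_pow, ← pow_mul, div_le_div_iff₀ (by positivity) (by positivity),
      mul_comm _ ((q : ℝ) ^ s)]
    exact_mod_cast hlog
  have ha : exp 1 ≤ (p : ℝ) / q := by
    rw [le_div_iff₀ hq']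
    have : (3 : ℝ) * q ≤ p := by exact_mod_cast hpq
    nlinarith [exp_one_lt_d9]
  refine lt_mul_div_log_of_le ha
    (div_le_log_of_pow_le hq (by linarith [exp_one_lt_d9]) hm')
    (log_le_div_of_pow_le hs ((exp_pos 1).trans_le ha) (by positivity)
      (by linarith [exp_one_gt_d9]) hlog') (by positivity) ?_
  have : (k : ℝ) * r * q * 10000 < 13841 * p * s := by exact_mod_cast hk
  rw [mul_div_assoc', mul_div_assoc', div_lt_div_iff₀ hs' hq']
  linarith

lemma cast_lt_of_prod_primeLowerBound_le {n k : ℕ} (hk : 4 ≤ k) (hk' : k < 13)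
    (hn : ∏ j ∈ range k, primeLowerBound j ≤ n) : (k : ℝ) < 1.3841 * log n / log (log n) := by
  -- `p/q` and `r/s` are rational approximations of `log (∏ j ∈ range k, primeLowerBound j)`
  -- from below and of its logarithm from above; `+kernel` because the exponents exceed the
  -- elaborator's evaluation threshold.
  interval_cases k
  · exact cast_lt_of_isLogCertificate 16 3 32 19 hn (by decide +kernel)
  · exact cast_lt_of_isLogCertificate 147 19 41 20 hn (by decide +kernel)
  · exact cast_lt_of_isLogCertificate 134 13 7 3 hn (by decide +kernel)
  · exact cast_lt_of_isLogCertificate 92 7 49 19 hn (by decide +kernel)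
  · exact cast_lt_of_isLogCertificate 370 23 164 59 hn (by decide +kernel)
  · exact cast_lt_of_isLogCertificate 2499 130 337 114 hn (by decide +kernel)
  · exact cast_lt_of_isLogCertificate 384 17 53 17 hn (by decide +kernel)
  · exact cast_lt_of_isLogCertificate 26 1 62 19 hn (by decide +kernel)
  · exact cast_lt_of_isLogCertificate 563 19 61 18 hn (by decide +kernel)

theorem omega_lt (n : ℕ) (hn : 3 ≤ n) :
    (n.primeFactors.card : ℝ) <
      1.3841 * Real.log n / Real.log (Real.log n) := by
  have hprod := prod_primeLowerBound_le (n := n) (by omega)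
  set k := #n.primeFactors
  obtain hk | hk := lt_or_ge k 4
  · have hlog : 1 < log n := by
      rw [lt_log_iff_exp_lt (by positivity)]
      linarith [exp_one_lt_d9, show (3 : ℝ) ≤ n by exact_mod_cast hn]
    refine lt_mul_div_log_of_lt_mul_exp_one hlog (by norm_num) ?_
    linarith [exp_one_gt_d9, show (k : ℝ) ≤ 3 by exact_mod_cast (by omega : k ≤ 3)]
  obtain hk' | hk' := lt_or_ge k 13
  · exact cast_lt_of_prod_primeLowerBound_le hk hk' hprod
  · refine lt_mul_log_div_log_log_of_pow_self_le ?_ (by omega)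
      ((pow_self_le_prod_primeLowerBound hk').trans hprod)
    have : (exp 1)⁻¹ < 0.3841 := by
      rw [inv_lt_comm₀ (exp_pos 1) (by norm_num)]
      linarith [exp_one_gt_d9]
    linarith
end

section
/- For every integer n ≥ 2310, 2^{ω(n)} < n^{0.47}, where ω(n) is the number of distinct prime factors of n. -/
open Finset

/-- pow-trick: to show `a < b^0.47` it suffices `a^100 < b^47`. -/
lemma rpow_gt_aux (a b : ℝ) (hb : 0 ≤ b) (h : a ^ (100 : ℕ) < b ^ (47 : ℕ)) :
    a < b ^ (0.47 : ℝ) := by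
  have hpos : 0 ≤ b ^ (0.47 : ℝ) := Real.rpow_nonneg hb _
  refine lt_of_pow_lt_pow_left₀ 100 hpos ?_
  have : (b ^ (0.47 : ℝ)) ^ (100 : ℕ) = b ^ (47 : ℕ) := by
    rw [← Real.rpow_natCast (b ^ (0.47 : ℝ)) 100, ← Real.rpow_mul hb, ← Real.rpow_natCast b 47]
    norm_num
  rw [this]; exact h

/-- generic step: if all primes below `q` lie in `P` with `P.card = m`, and every
prime finset of card ≥ m has product ≥ B, then card ≥ m+1 gives product ≥ q*B. -/
lemma key_step (q m B : ℕ) (P : Finset ℕ) (hP : ∀ p, p.Prime → p < q → p ∈ P)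
    (hPcard : P.card = m)
    (prev : ∀ S : Finset ℕ, (∀ p ∈ S, p.Prime) → m ≤ S.card → B ≤ ∏ p ∈ S, p) :
    ∀ S : Finset ℕ, (∀ p ∈ S, p.Prime) → m + 1 ≤ S.card → q * B ≤ ∏ p ∈ S, p := by
  intro S hS hcard
  have hne : S.Nonempty := card_pos.mp (by omega)
  set p := S.max' hne with hp
  have hpS : p ∈ S := S.max'_mem hne
  have hqp : q ≤ p := by
    by_contra hlt
    push_neg at hlt
    have hsub : S ⊆ P := by
      intro x hx
      exact hP x (hS x hx) (lt_of_le_of_lt (S.le_max' x hx) hlt)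
    have := Finset.card_le_card hsub
    omega
  have herase : B ≤ ∏ x ∈ S.erase p, x := by
    refine prev _ (fun x hx => hS x (mem_of_mem_erase hx)) ?_
    have := Finset.card_erase_of_mem hpS
    omega
  calc q * B ≤ p * ∏ x ∈ S.erase p, x := Nat.mul_le_mul hqp herase
    _ = ∏ x ∈ S, x := Finset.mul_prod_erase S (fun x => x) hpS

lemma prod_ge_base : ∀ S : Finset ℕ, (∀ p ∈ S, p.Prime) → 0 ≤ S.card → 1 ≤ ∏ p ∈ S, p := by
  intro S hS _
  exact Finset.one_le_prod' fun p hp => (hS p hp).one_lt.le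

lemma prod_primes_ge (S : Finset ℕ) (hS : ∀ p ∈ S, p.Prime) (h6 : 6 ≤ S.card) :
    30030 ≤ ∏ p ∈ S, p := by
  have h1 := key_step 2 0 1 ∅ (by intro p hp hlt; have := hp.two_le; omega) rfl prod_ge_base
  have h2 := key_step 3 1 2 {2} (by intro p hp hlt; interval_cases p <;> revert hp <;> decide) rfl h1
  have h3 := key_step 5 2 6 {2, 3} (by intro p hp hlt; interval_cases p <;> revert hp <;> decide) rfl h2
  have h4 := key_step 7 3 30 {2, 3, 5} (by intro p hp hlt; interval_cases p <;> revert hp <;> decide) rfl h3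
  have h5 := key_step 11 4 210 {2, 3, 5, 7} (by intro p hp hlt; interval_cases p <;> revert hp <;> decide) rfl h4
  have h6' := key_step 13 5 2310 {2, 3, 5, 7, 11} (by intro p hp hlt; interval_cases p <;> revert hp <;> decide) rfl h5
  exact h6' S hS h6

/-- main combinatorial lemma -/
lemma main_lemma : ∀ S : Finset ℕ, (∀ p ∈ S, p.Prime) → 6 ≤ S.card →
    (2 : ℝ) ^ S.card < ((∏ p ∈ S, p : ℕ) : ℝ) ^ (0.47 : ℝ) := by
  intro S
  induction S using Finset.strongInduction with
  | _ S ih =>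
    intro hS h6
    rcases eq_or_lt_of_le h6 with heq | hlt
    · -- card = 6
      have hprod : 30030 ≤ ∏ p ∈ S, p := prod_primes_ge S hS h6
      have : (2 : ℝ) ^ S.card = 64 := by rw [← heq]; norm_num
      rw [this]
      have h30 : (64 : ℝ) < (30030 : ℝ) ^ (0.47 : ℝ) := by
        apply rpow_gt_aux _ _ (by norm_num)
        norm_num
      refine lt_of_lt_of_le h30 (Real.rpow_le_rpow (by norm_num) ?_ (by norm_num))
      exact_mod_cast hprod
    · -- card ≥ 7
      have hne : S.Nonempty := card_pos.mp (by omega)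
      set p := S.max' hne with hp
      have hpS : p ∈ S := S.max'_mem hne
      have hp5 : 5 ≤ p := by
        by_contra hlt5
        push_neg at hlt5
        have hsub : S ⊆ {2, 3} := by
          intro x hx
          have hxp := (hS x hx).two_le
          have hxle : x ≤ p := S.le_max' x hx
          have : x < 5 := lt_of_le_of_lt hxle hlt5
          have := hS x hx
          revert this; clear hxle; revert hxp; interval_cases x <;> decide
        have h2 := Finset.card_le_card hsub
        have : ({2, 3} : Finset ℕ).card ≤ 2 := by decide
        omega
      have hcard_erase : (S.erase p).card = S.card - 1 := Finset.card_erase_of_mem hpS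
      have h6' : 6 ≤ (S.erase p).card := by omega
      have ihe := ih (S.erase p) (Finset.erase_ssubset hpS)
        (fun x hx => hS x (mem_of_mem_erase hx)) h6'
      have hsplit : (∏ x ∈ S, x) = p * ∏ x ∈ S.erase p, x :=
        (Finset.mul_prod_erase S _ hpS).symm
      have hprod_pos : (0:ℝ) ≤ (∏ x ∈ S.erase p, x : ℕ) := Nat.cast_nonneg _
      have hrpow : ((∏ x ∈ S, x : ℕ) : ℝ) ^ (0.47 : ℝ)
          = (p : ℝ) ^ (0.47 : ℝ) * ((∏ x ∈ S.erase p, x : ℕ) : ℝ) ^ (0.47 : ℝ) := by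
        rw [hsplit, Nat.cast_mul, Real.mul_rpow (Nat.cast_nonneg _) hprod_pos]
      have h2p : (2 : ℝ) < (p : ℝ) ^ (0.47 : ℝ) := by
        have h5r : (2 : ℝ) < (5 : ℝ) ^ (0.47 : ℝ) := by
          apply rpow_gt_aux _ _ (by norm_num); norm_num
        refine lt_of_lt_of_le h5r (Real.rpow_le_rpow (by norm_num) ?_ (by norm_num))
        exact_mod_cast hp5
      have hcards : S.card = (S.erase p).card + 1 := by omega
      rw [hrpow, hcards, pow_succ]
      calc (2:ℝ) ^ (S.erase p).card * 2
          < ((∏ x ∈ S.erase p, x : ℕ) : ℝ) ^ (0.47 : ℝ) * ((p:ℝ) ^ (0.47:ℝ)) := by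
            apply mul_lt_mul' ihe.le h2p (by norm_num)
            apply Real.rpow_pos_of_pos
            have : 0 < ∏ x ∈ S.erase p, x :=
              Finset.prod_pos fun x hx => (hS x (Finset.mem_of_mem_erase hx)).pos
            exact_mod_cast this
        _ = (p : ℝ) ^ (0.47 : ℝ) * ((∏ x ∈ S.erase p, x : ℕ) : ℝ) ^ (0.47 : ℝ) := by ring

theorem two_pow_omega_lt (n : ℕ) (hn : 2310 ≤ n) :
    (2 : ℝ) ^ (n.primeFactors.card : ℕ) < (n : ℝ) ^ (0.47 : ℝ) := by
  have hn0 : 0 < n := by omega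
  have hnr : (2310 : ℝ) ≤ (n : ℝ) := by exact_mod_cast hn
  by_cases hk : n.primeFactors.card ≤ 5
  · have h32 : (2 : ℝ) ^ n.primeFactors.card ≤ 32 := by
      calc (2:ℝ) ^ n.primeFactors.card ≤ 2 ^ 5 := pow_le_pow_right₀ (by norm_num) hk
        _ = 32 := by norm_num
    have h2310 : (32 : ℝ) < (2310 : ℝ) ^ (0.47 : ℝ) := by
      apply rpow_gt_aux _ _ (by norm_num); norm_num
    refine lt_of_le_of_lt h32 (lt_of_lt_of_le h2310 ?_)
    exact Real.rpow_le_rpow (by norm_num) hnr (by norm_num)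
  · push_neg at hk
    have h6 : 6 ≤ n.primeFactors.card := hk
    have hmain := main_lemma n.primeFactors (fun p hp => Nat.prime_of_mem_primeFactors hp) h6
    have hdvd : (∏ p ∈ n.primeFactors, p) ∣ n := Nat.prod_primeFactors_dvd n
    have hle : (∏ p ∈ n.primeFactors, p) ≤ n := Nat.le_of_dvd hn0 hdvd
    refine lt_of_lt_of_le hmain (Real.rpow_le_rpow (Nat.cast_nonneg _) ?_ (by norm_num))
    exact_mod_cast hle
end

section
/- Let m = p₁⋯p_k with p₁ < ⋯ < p_k odd primes, k ≥ 1, and h_m(X) = (X^m − 1)/Φ_m(X). Then for any complex x with |x| = 1, |h_m(x)| ≤ 2·m^{2^{k−1}/k}. Consequently, if n is a positive integer with greatest odd squarefree divisor m > 1 and ω(n) ≥ k, then |h_m(x)| ≤ 2·n^{2^{ω(n)−1}/ω(n)} for |x| = 1. -/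
/-!
Write `‖f‖₁` for the sum of the absolute values of the coefficients of `f ∈ ℤ[X]`. It bounds
`|f(x)|` on the unit circle, is submultiplicative, and does not grow under `f(X) ↦ f(X ^ q)`.
For a prime `q ∤ m` one has `h_{mq} = Φ_m · h_m(X ^ q)` and
`Φ_{mq} · (X ^ m - 1) = Φ_m(X ^ q) · h_m`. The second identity controls `Φ_{mq}` too: as
`deg Φ_{mq} < (q - 1) m`, the product `Φ_{mq} · (X ^ {(q-1)m} - 1)` consists of two disjoint
copies of `Φ_{mq}`, while `X ^ {(q-1)m} - 1 = (X ^ m - 1)(1 + X ^ m + ⋯ + X ^ {(q-2)m})`; hence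
`2‖Φ_{mq}‖₁ ≤ (q - 1) ‖Φ_m‖₁ ‖h_m‖₁`. Induction over the primes gives `‖h_m‖₁ ≤ 2Q` and
`‖Φ_m‖₁ ≤ p_k Q` with `Q = ∏_{i<k} p_i ^ 2 ^ (k-1-i)`, and Chebyshev's sum inequality for
the decreasing exponents against the increasing `log p_i` gives `Q ≤ m ^ (2 ^ (k-1) / k)`.
-/

open Finset

namespace Polynomial

noncomputable def cyclotomicCofactor (n : ℕ) (R : Type*) [CommRing R] : R[X] :=
  (X ^ n - 1) /ₘ cyclotomic n R

variable {R : Type*} [CommRing R]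

theorem cyclotomic_mul_cyclotomicCofactor (n : ℕ) :
    cyclotomic n R * cyclotomicCofactor n R = X ^ n - 1 := by
  conv_rhs => rw [← modByMonic_add_div (X ^ n - 1) (cyclotomic n R)]
  rw [(modByMonic_eq_zero_iff_dvd (cyclotomic.monic n R)).2 (cyclotomic.dvd_X_pow_sub_one n R),
    zero_add, cyclotomicCofactor]

theorem cyclotomicCofactor_eq_of_mul_eq {n : ℕ} {g : R[X]} (h : cyclotomic n R * g = X ^ n - 1) :
    cyclotomicCofactor n R = g := by
  rw [cyclotomicCofactor, ← h, mul_divByMonic_cancel_left _ (cyclotomic.monic n R)]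

theorem cyclotomicCofactor_prime {p : ℕ} (hp : p.Prime) : cyclotomicCofactor p R = X - 1 :=
  haveI := Fact.mk hp
  cyclotomicCofactor_eq_of_mul_eq (cyclotomic_prime_mul_X_sub_one R p)

theorem cyclotomicCofactor_mul_prime {n p : ℕ} (hp : p.Prime) (hpn : ¬p ∣ n) :
    cyclotomicCofactor (n * p) R = cyclotomic n R * expand R p (cyclotomicCofactor n R) := by
  refine cyclotomicCofactor_eq_of_mul_eq ?_
  rw [← mul_assoc, ← cyclotomic_expand_eq_cyclotomic_mul hp hpn, ← map_mul,
    cyclotomic_mul_cyclotomicCofactor, map_sub, map_pow, expand_X, map_one, ← pow_mul, mul_comm]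

theorem cyclotomic_mul_prime_mul_X_pow_sub_one {n p : ℕ} (hp : p.Prime) (hpn : ¬p ∣ n) :
    cyclotomic (n * p) R * (X ^ n - 1) = expand R p (cyclotomic n R) * cyclotomicCofactor n R := by
  rw [cyclotomic_expand_eq_cyclotomic_mul hp hpn, mul_assoc, cyclotomic_mul_cyclotomicCofactor]

noncomputable def l1Norm (f : ℤ[X]) : ℕ := f.sum fun _ a ↦ a.natAbs

theorem l1Norm_eq_sum_range {f : ℤ[X]} {N : ℕ} (h : f.natDegree < N) :
    f.l1Norm = ∑ i ∈ range N, (f.coeff i).natAbs :=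
  sum_over_range' f (fun _ ↦ Int.natAbs_zero) N h

@[simp]
theorem l1Norm_zero : (0 : ℤ[X]).l1Norm = 0 := sum_zero_index _

@[simp]
theorem l1Norm_monomial (n : ℕ) (a : ℤ) : (monomial n a).l1Norm = a.natAbs :=
  sum_monomial_index a _ Int.natAbs_zero

@[simp]
theorem l1Norm_X_pow (n : ℕ) : (X ^ n : ℤ[X]).l1Norm = 1 := by
  rw [X_pow_eq_monomial, l1Norm_monomial, Int.natAbs_one]

theorem l1Norm_add_le (f g : ℤ[X]) : (f + g).l1Norm ≤ f.l1Norm + g.l1Norm := by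
  set N := max f.natDegree g.natDegree + 1
  rw [l1Norm_eq_sum_range (N := N) ((natDegree_add_le f g).trans_lt (Nat.lt_succ_self _)),
    l1Norm_eq_sum_range (N := N) (by omega), l1Norm_eq_sum_range (N := N) (by omega),
    ← sum_add_distrib]
  exact sum_le_sum fun i _ ↦ by simpa only [coeff_add] using Int.natAbs_add_le _ _

theorem l1Norm_sum_le {ι : Type*} (s : Finset ι) (f : ι → ℤ[X]) :
    (∑ i ∈ s, f i).l1Norm ≤ ∑ i ∈ s, (f i).l1Norm :=
  le_sum_of_subadditive l1Norm l1Norm_zero.le l1Norm_add_le s f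

theorem l1Norm_mul_le (f g : ℤ[X]) : (f * g).l1Norm ≤ f.l1Norm * g.l1Norm := by
  rw [mul_eq_sum_sum]
  refine (l1Norm_sum_le _ _).trans ?_
  rw [l1Norm, sum, sum_mul]
  refine sum_le_sum fun i _ ↦ ?_
  refine (l1Norm_sum_le _ _).trans_eq ?_
  rw [l1Norm, sum, mul_sum]
  simp only [l1Norm_monomial, Int.natAbs_mul]

theorem l1Norm_expand_le (p : ℕ) (f : ℤ[X]) : (expand ℤ p f).l1Norm ≤ f.l1Norm := by
  conv_lhs => rw [as_sum_support f]
  rw [map_sum]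
  refine (l1Norm_sum_le _ _).trans_eq ?_
  simp only [expand_monomial, l1Norm_monomial]
  rfl

theorem norm_aeval_le_l1Norm (f : ℤ[X]) {x : ℂ} (hx : ‖x‖ ≤ 1) :
    ‖aeval x f‖ ≤ f.l1Norm := by
  rw [aeval_def, eval₂_eq_sum, l1Norm, sum, sum, Nat.cast_sum]
  refine (norm_sum_le _ _).trans (sum_le_sum fun i _ ↦ ?_)
  rw [norm_mul, norm_pow, algebraMap_int_eq, eq_intCast, Complex.norm_intCast, Nat.cast_natAbs,
    Int.cast_abs]
  exact mul_le_of_le_one_right (abs_nonneg _) (pow_le_one₀ (norm_nonneg _) hx)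

theorem l1Norm_mul_X_pow_sub_one {f : ℤ[X]} {N : ℕ} (hf : f.natDegree < N) :
    (f * (X ^ N - 1)).l1Norm = 2 * f.l1Norm := by
  have hdeg : (f * (X ^ N - 1)).natDegree < N + N := by
    refine natDegree_mul_le.trans_lt ?_
    rw [← C_1, natDegree_X_pow_sub_C]
    omega
  have hlow : ∀ i < N, (f * (X ^ N - 1)).coeff i = -f.coeff i := fun i hi ↦ by
    rw [mul_sub, mul_one, coeff_sub, coeff_mul_X_pow', if_neg (by omega), zero_sub]
  have hhigh : ∀ i, (f * (X ^ N - 1)).coeff (N + i) = f.coeff i := fun i ↦ by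
    rw [mul_sub, mul_one, coeff_sub, coeff_mul_X_pow', if_pos (Nat.le_add_right N i),
      Nat.add_sub_cancel_left, coeff_eq_zero_of_natDegree_lt (n := N + i) (by omega), sub_zero]
  rw [l1Norm_eq_sum_range hdeg, sum_range_add, l1Norm_eq_sum_range hf, two_mul]
  congr 1
  · exact sum_congr rfl fun i hi ↦ by rw [hlow i (mem_range.1 hi), Int.natAbs_neg]
  · exact sum_congr rfl fun i _ ↦ by rw [hhigh]

theorem two_mul_l1Norm_le {f : ℤ[X]} {k m : ℕ} (hf : f.natDegree < k * m) :
    2 * f.l1Norm ≤ k * (f * (X ^ m - 1)).l1Norm := by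
  have hgeom : (X ^ m - 1 : ℤ[X]) * ∑ i ∈ range k, (X ^ m) ^ i = X ^ (k * m) - 1 := by
    rw [mul_comm, geom_sum_mul, ← pow_mul, mul_comm]
  calc 2 * f.l1Norm = (f * (X ^ (k * m) - 1)).l1Norm := (l1Norm_mul_X_pow_sub_one hf).symm
    _ = l1Norm (f * (X ^ m - 1) * ∑ i ∈ range k, (X ^ m) ^ i) := by rw [mul_assoc, hgeom]
    _ ≤ l1Norm (f * (X ^ m - 1)) * l1Norm (∑ i ∈ range k, (X ^ m) ^ i) := l1Norm_mul_le _ _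
    _ ≤ l1Norm (f * (X ^ m - 1)) * k := by
      gcongr
      refine (l1Norm_sum_le _ _).trans_eq ?_
      simp only [← pow_mul, l1Norm_X_pow, sum_const, card_range, smul_eq_mul, mul_one]
    _ = k * l1Norm (f * (X ^ m - 1)) := mul_comm _ _

theorem l1Norm_X_sub_one : (X - 1 : ℤ[X]).l1Norm = 2 := by
  rw [l1Norm_eq_sum_range (N := 2) (by rw [← C_1, natDegree_X_sub_C]; omega)]
  simp [sum_range_succ, coeff_X, coeff_one]

theorem l1Norm_cyclotomic_prime {p : ℕ} (hp : p.Prime) : (cyclotomic p ℤ).l1Norm ≤ p := by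
  have := Fact.mk hp
  rw [cyclotomic_prime]
  refine (l1Norm_sum_le _ _).trans_eq ?_
  simp

theorem l1Norm_cyclotomicCofactor_mul_prime_le {n p : ℕ} (hp : p.Prime) (hpn : ¬p ∣ n) :
    (cyclotomicCofactor (n * p) ℤ).l1Norm ≤
      (cyclotomic n ℤ).l1Norm * (cyclotomicCofactor n ℤ).l1Norm := by
  rw [cyclotomicCofactor_mul_prime hp hpn]
  exact (l1Norm_mul_le _ _).trans (Nat.mul_le_mul_left _ (l1Norm_expand_le _ _))

theorem two_mul_l1Norm_cyclotomic_mul_prime_le {n p : ℕ} (hn : 1 < n) (hp : p.Prime)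
    (hpn : ¬p ∣ n) :
    2 * (cyclotomic (n * p) ℤ).l1Norm ≤
      (p - 1) * ((cyclotomic n ℤ).l1Norm * (cyclotomicCofactor n ℤ).l1Norm) := by
  have hdeg : (cyclotomic (n * p) ℤ).natDegree < (p - 1) * n := by
    rw [natDegree_cyclotomic, Nat.totient_mul ((Nat.Prime.coprime_iff_not_dvd hp).2 hpn).symm,
      Nat.totient_prime hp, mul_comm]
    exact Nat.mul_lt_mul_of_pos_left (Nat.totient_lt n hn) (by have := hp.two_le; omega)
  refine (two_mul_l1Norm_le hdeg).trans (Nat.mul_le_mul_left _ ?_)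
  rw [cyclotomic_mul_prime_mul_X_pow_sub_one hp hpn]
  exact (l1Norm_mul_le _ _).trans (Nat.mul_le_mul_right _ (l1Norm_expand_le _ _))

theorem prod_range_succ_pow_two_pow (p : ℕ → ℕ) (K : ℕ) :
    ∏ i ∈ range (K + 1), p i ^ 2 ^ (K - i) =
      (∏ i ∈ range K, p i ^ 2 ^ (K - 1 - i)) ^ 2 * p K := by
  rw [prod_range_succ, Nat.sub_self, pow_zero, pow_one, ← prod_pow]
  congr 1
  refine prod_congr rfl fun i hi ↦ ?_
  rw [← pow_mul, ← pow_succ, show K - 1 - i + 1 = K - i by have := mem_range.1 hi; omega]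

theorem l1Norm_cyclotomicCofactor_prod_primes_le {p : ℕ → ℕ} {K : ℕ}
    (hp : ∀ i < K + 1, (p i).Prime) (hinj : Set.InjOn p (Set.Iio (K + 1))) :
    (cyclotomicCofactor (∏ i ∈ range (K + 1), p i) ℤ).l1Norm ≤
        2 * ∏ i ∈ range K, p i ^ 2 ^ (K - 1 - i) ∧
      (cyclotomic (∏ i ∈ range (K + 1), p i) ℤ).l1Norm ≤
        p K * ∏ i ∈ range K, p i ^ 2 ^ (K - 1 - i) := by
  induction K with
  | zero =>
    have hp0 := hp 0 zero_lt_one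
    simp only [zero_add, prod_range_one, range_zero, prod_empty, mul_one,
      cyclotomicCofactor_prime hp0, l1Norm_X_sub_one, le_refl, true_and]
    exact l1Norm_cyclotomic_prime hp0
  | succ K ih =>
    obtain ⟨ihh, ihΦ⟩ := ih (fun i hi ↦ hp i (by omega))
      (hinj.mono (Set.Iio_subset_Iio (Nat.le_succ _)))
    set m := ∏ i ∈ range (K + 1), p i
    set Q := ∏ i ∈ range K, p i ^ 2 ^ (K - 1 - i)
    set q := p (K + 1)
    have hq : q.Prime := hp (K + 1) (Nat.lt_succ_self _)
    have hqm : ¬q ∣ m := by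
      rw [hq.prime.dvd_finsetProd_iff]
      rintro ⟨i, hi, hdvd⟩
      have hi : i < K + 1 := mem_range.1 hi
      have hqi : q = p i := (Nat.prime_dvd_prime_iff_eq hq (hp i (by omega))).1 hdvd
      exact hi.ne' (hinj (Set.mem_Iio.2 (Nat.lt_succ_self _)) (Set.mem_Iio.2 (by omega)) hqi)
    have hm : 1 < m :=
      (hp 0 (by omega)).one_lt.trans_le <| Nat.le_of_dvd
        (prod_pos fun i hi ↦ (hp i (by have := mem_range.1 hi; omega)).pos)
        (dvd_prod_of_mem p (mem_range.2 (Nat.succ_pos K)))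
    rw [prod_range_succ, Nat.add_sub_cancel, prod_range_succ_pow_two_pow]
    constructor
    · calc l1Norm (cyclotomicCofactor (m * q) ℤ)
          ≤ l1Norm (cyclotomic m ℤ) * l1Norm (cyclotomicCofactor m ℤ) :=
            l1Norm_cyclotomicCofactor_mul_prime_le hq hqm
        _ ≤ (p K * Q) * (2 * Q) := Nat.mul_le_mul ihΦ ihh
        _ = 2 * (Q ^ 2 * p K) := by ring
    · refine Nat.le_of_mul_le_mul_left ?_ two_pos
      calc 2 * l1Norm (cyclotomic (m * q) ℤ)
          ≤ (q - 1) * (l1Norm (cyclotomic m ℤ) * l1Norm (cyclotomicCofactor m ℤ)) :=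
            two_mul_l1Norm_cyclotomic_mul_prime_le hm hq hqm
        _ ≤ q * ((p K * Q) * (2 * Q)) := Nat.mul_le_mul (Nat.sub_le _ _) (Nat.mul_le_mul ihΦ ihh)
        _ = 2 * (q * (Q ^ 2 * p K)) := by ring

end Polynomial

theorem prod_rpow_le_prod_rpow_sum_div_card {ι : Type*} {s : Finset ι} {a e : ι → ℝ}
    (ha : ∀ i ∈ s, 0 < a i) (hae : AntivaryOn e (fun i ↦ Real.log (a i)) s) :
    ∏ i ∈ s, a i ^ e i ≤ (∏ i ∈ s, a i) ^ ((∑ i ∈ s, e i) / #s) := by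
  rcases s.eq_empty_or_nonempty with rfl | hs
  · simp
  have hprod := prod_pos ha
  have hpow : ∀ i ∈ s, 0 < a i ^ e i := fun i hi ↦ Real.rpow_pos_of_pos (ha i hi) _
  rw [← Real.log_le_log_iff (prod_pos hpow) (Real.rpow_pos_of_pos hprod _), Real.log_rpow hprod,
    Real.log_prod fun i hi ↦ (hpow i hi).ne', Real.log_prod fun i hi ↦ (ha i hi).ne',
    sum_congr rfl fun i hi ↦ Real.log_rpow (ha i hi) _, div_mul_eq_mul_div,
    le_div_iff₀ (by exact_mod_cast hs.card_pos), mul_comm]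
  exact hae.card_mul_sum_le_sum_mul_sum

theorem prod_pow_two_pow_le_rpow {p : ℕ → ℕ} {K : ℕ} (hp : ∀ i < K + 1, 0 < p i)
    (hmono : StrictMonoOn p (Set.Iio (K + 1))) :
    ((∏ i ∈ range K, p i ^ 2 ^ (K - 1 - i) : ℕ) : ℝ) ≤
      (∏ i ∈ range (K + 1), (p i : ℝ)) ^ ((2 : ℝ) ^ K / (K + 1)) := by
  set e : ℕ → ℝ := fun i ↦ if i < K then ((2 ^ (K - 1 - i) : ℕ) : ℝ) else 0
  have heK : e K = 0 := if_neg (lt_irrefl K)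
  have he : ∀ i ∈ range K, e i = ((2 ^ (K - 1 - i) : ℕ) : ℝ) :=
    fun i hi ↦ if_pos (mem_range.1 hi)
  have hlhs : ((∏ i ∈ range K, p i ^ 2 ^ (K - 1 - i) : ℕ) : ℝ) =
      ∏ i ∈ range (K + 1), (p i : ℝ) ^ e i := by
    rw [prod_range_succ, heK, Real.rpow_zero, mul_one, Nat.cast_prod]
    refine prod_congr rfl fun i hi ↦ ?_
    rw [he i hi, Real.rpow_natCast, Nat.cast_pow]
  have hsum : ∑ i ∈ range (K + 1), e i ≤ 2 ^ K := by
    rw [sum_range_succ, heK, add_zero, sum_congr rfl he, ← Nat.cast_sum,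
      sum_range_reflect (2 ^ ·) K]
    exact_mod_cast (Nat.geomSum_lt le_rfl fun _ ↦ mem_range.1).le
  have hanti : AntivaryOn e (fun i ↦ Real.log (p i)) (range (K + 1)) := by
    rw [coe_range]
    intro i hi j hj hlog
    have hij : i < j := (hmono.lt_iff_lt hi hj).1 <| by
      exact_mod_cast
        (Real.log_lt_log_iff (by exact_mod_cast hp i hi) (by exact_mod_cast hp j hj)).1 hlog
    simp only [e]
    split_ifs with hj' hi'
    · exact_mod_cast Nat.pow_le_pow_right two_pos (by omega)
    · omega
    · positivity
    · exact le_rfl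
  have hone : 1 ≤ ∏ i ∈ range (K + 1), (p i : ℝ) :=
    one_le_prod fun i hi ↦ by exact_mod_cast hp i (mem_range.1 hi)
  calc _ = ∏ i ∈ range (K + 1), (p i : ℝ) ^ e i := hlhs
    _ ≤ (∏ i ∈ range (K + 1), (p i : ℝ)) ^ ((∑ i ∈ range (K + 1), e i) / (K + 1)) := by
      simpa using prod_rpow_le_prod_rpow_sum_div_card
        (fun i hi ↦ (by exact_mod_cast hp i (mem_range.1 hi) : (0 : ℝ) < p i)) hanti
    _ ≤ _ := Real.rpow_le_rpow_of_exponent_le hone (by gcongr)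

theorem two_pow_div_succ_le {a b : ℕ} (hab : a ≤ b) :
    (2 : ℝ) ^ a / (a + 1) ≤ 2 ^ b / (b + 1) := by
  have hmono : Monotone fun n : ℕ ↦ (2 : ℝ) ^ n / (n + 1) := monotone_nat_of_le_succ fun n ↦ by
    rw [div_le_div_iff₀ (by positivity) (by positivity), pow_succ]
    push_cast
    nlinarith [pow_pos (two_pos : (0 : ℝ) < 2) n]
  exact hmono hab

open Polynomial

theorem h_bound_rpow_general (k : ℕ) (hk : 1 ≤ k) (p : ℕ → ℕ)
    (hprime : ∀ i < k, (p i).Prime)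
    (hmono : ∀ i j, i < j → j < k → p i < p j) :
    (∀ x : ℂ, ‖x‖ = 1 →
      ‖(aeval x
          ((X ^ (∏ i ∈ Finset.range k, p i) - 1 : Polynomial ℤ) /ₘ
            cyclotomic (∏ i ∈ Finset.range k, p i) ℤ))‖ ≤
        2 * (∏ i ∈ Finset.range k, p i : ℝ) ^ ((2 ^ (k - 1) : ℝ) / k)) ∧
    (∀ n : ℕ, 0 < n →
      (∏ q ∈ n.primeFactors.filter (· ≠ 2), q) = ∏ i ∈ Finset.range k, p i →
      1 < ∏ i ∈ Finset.range k, p i → k ≤ n.primeFactors.card →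
      ∀ x : ℂ, ‖x‖ = 1 →
        ‖(aeval x
            ((X ^ (∏ i ∈ Finset.range k, p i) - 1 : Polynomial ℤ) /ₘ
              cyclotomic (∏ i ∈ Finset.range k, p i) ℤ))‖ ≤
          2 * (n : ℝ) ^ ((2 ^ (n.primeFactors.card - 1) : ℝ) / n.primeFactors.card)) := by
  obtain ⟨K, rfl⟩ : ∃ K, k = K + 1 := ⟨k - 1, by omega⟩
  have hmono' : StrictMonoOn p (Set.Iio (K + 1)) := fun i _ j hj hij ↦ hmono i j hij hj
  have hbound : ∀ x : ℂ, ‖x‖ = 1 →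
      ‖aeval x (cyclotomicCofactor (∏ i ∈ range (K + 1), p i) ℤ)‖ ≤
        2 * (∏ i ∈ range (K + 1), (p i : ℝ)) ^ ((2 : ℝ) ^ K / (K + 1)) := fun x hx ↦
    calc _ ≤ (l1Norm (cyclotomicCofactor (∏ i ∈ range (K + 1), p i) ℤ) : ℝ) :=
          norm_aeval_le_l1Norm _ hx.le
      _ ≤ 2 * ((∏ i ∈ range K, p i ^ 2 ^ (K - 1 - i) : ℕ) : ℝ) := by
          exact_mod_cast (l1Norm_cyclotomicCofactor_prod_primes_le hprime hmono'.injOn).1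
      _ ≤ _ := by
          gcongr
          exact prod_pow_two_pow_le_rpow (fun i hi ↦ (hprime i hi).pos) hmono'
  refine ⟨fun x hx ↦ by simpa [cyclotomicCofactor] using hbound x hx,
    fun n hn hrad _ hcard x hx ↦ ?_⟩
  have hmn : ∏ i ∈ range (K + 1), p i ≤ n := Nat.le_of_dvd hn <| hrad ▸
    (prod_dvd_prod_of_subset _ _ _ (filter_subset _ _)).trans (Nat.prod_primeFactors_dvd n)
  have hexp : (2 : ℝ) ^ K / (K + 1) ≤
      (2 ^ (n.primeFactors.card - 1) : ℝ) / n.primeFactors.card := by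
    have hω : ((n.primeFactors.card - 1 : ℕ) : ℝ) + 1 = n.primeFactors.card := by
      rw [← Nat.cast_add_one, Nat.sub_add_cancel (by omega)]
    simpa only [hω] using two_pow_div_succ_le (Nat.le_sub_one_of_lt hcard)
  refine (hbound x hx).trans (mul_le_mul_of_nonneg_left ?_ zero_le_two)
  calc _ ≤ (n : ℝ) ^ ((2 : ℝ) ^ K / (K + 1)) :=
        Real.rpow_le_rpow (by positivity) (by exact_mod_cast hmn) (by positivity)
    _ ≤ _ := Real.rpow_le_rpow_of_exponent_le (by exact_mod_cast hn) hexp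

theorem h_bound_rpow (k : ℕ) (hk : 1 ≤ k) (p : ℕ → ℕ)
    (hprime : ∀ i < k, (p i).Prime) (hodd : ∀ i < k, Odd (p i))
    (hmono : ∀ i j, i < j → j < k → p i < p j) :
    (∀ x : ℂ, ‖x‖ = 1 →
      ‖(aeval x
          ((X ^ (∏ i ∈ Finset.range k, p i) - 1 : Polynomial ℤ) /ₘ
            cyclotomic (∏ i ∈ Finset.range k, p i) ℤ))‖ ≤
        2 * (∏ i ∈ Finset.range k, p i : ℝ) ^ ((2 ^ (k - 1) : ℝ) / k)) ∧
    (∀ n : ℕ, 0 < n →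
      (∏ q ∈ n.primeFactors.filter (· ≠ 2), q) = ∏ i ∈ Finset.range k, p i →
      1 < ∏ i ∈ Finset.range k, p i → k ≤ n.primeFactors.card →
      ∀ x : ℂ, ‖x‖ = 1 →
        ‖(aeval x
            ((X ^ (∏ i ∈ Finset.range k, p i) - 1 : Polynomial ℤ) /ₘ
              cyclotomic (∏ i ∈ Finset.range k, p i) ℤ))‖ ≤
          2 * (n : ℝ) ^ ((2 ^ (n.primeFactors.card - 1) : ℝ) / n.primeFactors.card)) :=
  h_bound_rpow_general k hk p hprime hmono
end
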